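/- arXiv:1903.04996 — 3 statements merged into one kernel-verified Lean document; each statement's English description precedes it below -/
import Mathlib

section
/- For every n ≥ 2, the real zero set of the generalized Motzkin polynomial is exactly the set of sign vectors: {x ∈ ℝⁿ : M_n(x) = 0} = {−1,1}ⁿ. -/
open MvPolynomial Finset

noncomputable section

/-- The all-ones exponent vector `e = (1,…,1)`. -/
def eAll (n : ℕ) : Fin n →₀ ℕ := Finsupp.equivFunOnFinite.symm (fun _ => 1)

/-- The exponent vector `2(e + e_j)`. -/
def expMotz (n : ℕ) (j : Fin n) : Fin n →₀ ℕ :=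
  Finsupp.equivFunOnFinite.symm (fun i => if i = j then 4 else 2)

/-- The exponent vector `2e = (2,…,2)`. -/
def twoE (n : ℕ) : Fin n →₀ ℕ := Finsupp.equivFunOnFinite.symm (fun _ => 2)

/-- The generalized Motzkin polynomial
`M_n = 1 + Σ_{j=1}^n x^{2(e+e_j)} − (n+1)·x^{2e}`. -/
def Motzkin (n : ℕ) : MvPolynomial (Fin n) ℝ :=
  1 + (∑ j : Fin n, monomial (expMotz n j) (1 : ℝ)) - monomial (twoE n) ((n : ℝ) + 1)

/-- The signed quadric `N_n = (1 − Σ_{j=1}^n x_j)²`. -/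
def SignedQuadric (n : ℕ) : MvPolynomial (Fin n) ℝ :=
  (1 - ∑ j : Fin n, X j) ^ 2

/-- `f` is a circuit polynomial. -/
def IsCircuit {n : ℕ} (f : MvPolynomial (Fin n) ℝ) : Prop :=
  (∃ (w : Fin n →₀ ℕ) (c : ℝ), 0 ≤ c ∧ f = monomial (2 • w) c) ∨
  (∃ r : ℕ, r ≤ n ∧ ∃ (α : Fin (r + 1) → (Fin n →₀ ℕ)) (c : Fin (r + 1) → ℝ)
      (β : Fin n →₀ ℕ) (fβ : ℝ) (lam : Fin (r + 1) → ℝ),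
    (∀ j, 0 < c j) ∧
    (∀ j i, Even (α j i)) ∧
    AffineIndependent ℝ (fun j => (fun i => (α j i : ℝ))) ∧
    (∀ j, 0 < lam j) ∧ (∑ j, lam j) = 1 ∧
    (∀ i, (β i : ℝ) = ∑ j, lam j * (α j i : ℝ)) ∧
    f = monomial β fβ + ∑ j, monomial (α j) (c j))

/-- `f` is a nonnegative circuit polynomial. -/
def IsNonnegCircuit {n : ℕ} (f : MvPolynomial (Fin n) ℝ) : Prop :=
  IsCircuit f ∧ ∀ x : Fin n → ℝ, 0 ≤ eval x f

/-- The set of sums of nonnegative circuit polynomials. -/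
def SONCset (n : ℕ) : Set (MvPolynomial (Fin n) ℝ) :=
  {f | ∃ (k : ℕ) (μ : Fin k → ℝ) (p : Fin k → MvPolynomial (Fin n) ℝ),
    (∀ i, 0 ≤ μ i) ∧ (∀ i, IsNonnegCircuit (p i)) ∧ f = ∑ i, μ i • p i}

/-- The set of sums of squares. -/
def SOSset (n : ℕ) : Set (MvPolynomial (Fin n) ℝ) :=
  {f | ∃ (k : ℕ) (p : Fin k → MvPolynomial (Fin n) ℝ), f = ∑ i, (p i) ^ 2}

/-- The set of sums of squares of binomials (SDSOS). -/
def SDSOSset (n : ℕ) : Set (MvPolynomial (Fin n) ℝ) :=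
  {f | ∃ (k : ℕ) (a b : Fin k → ℝ) (u v : Fin k → (Fin n →₀ ℕ)),
    f = ∑ i, (monomial (u i) (a i) + monomial (v i) (b i)) ^ 2}

/-- The Sherali-Adams set: nonnegative combinations of `x_I · x̄_J`. -/
def SAset (n : ℕ) : Set (MvPolynomial (Fin n) ℝ) :=
  {f | ∃ α : Finset (Fin n) × Finset (Fin n) → ℝ, (∀ p, 0 ≤ α p) ∧
    f = ∑ p : Finset (Fin n) × Finset (Fin n),
      α p • ((∏ i ∈ p.1, X i) * ∏ j ∈ p.2, (1 - X j))}

/-- The preprime generated by a finite constraint set. -/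
def preprime {n : ℕ} (G : Finset (MvPolynomial (Fin n) ℝ)) :
    Set (MvPolynomial (Fin n) ℝ) :=
  {p | ∃ (k : ℕ) (cc : Fin k → ℝ) (e : Fin k → MvPolynomial (Fin n) ℝ → ℕ),
    (∀ i, 0 ≤ cc i) ∧ p = ∑ i, cc i • ∏ g ∈ G, g ^ (e i g)}

/-- The feasibility set `𝒢₊` of a constraint set. -/
def feasSet {n : ℕ} (G : Finset (MvPolynomial (Fin n) ℝ)) : Set (Fin n → ℝ) :=
  {x | ∀ g ∈ G, 0 ≤ eval x g}

/-- The Boolean hypercube `{0,1}ⁿ ⊆ ℝⁿ`. -/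
def Hypercube (n : ℕ) : Set (Fin n → ℝ) := {x | ∀ i, x i = 0 ∨ x i = 1}

/-- The degree-`D` Putinar-type hierarchy `H(GEN, 𝒢, D)`. -/
def HPut {n : ℕ} (GEN : Set (MvPolynomial (Fin n) ℝ))
    (G : Finset (MvPolynomial (Fin n) ℝ)) (D : ℕ) : Set (MvPolynomial (Fin n) ℝ) :=
  {f | ∃ (k : ℕ) (s g : Fin k → MvPolynomial (Fin n) ℝ),
    (∀ i, s i ∈ GEN) ∧ (∀ i, g i ∈ G) ∧
    (∀ i, (s i * g i).totalDegree ≤ D) ∧ f = ∑ i, s i * g i}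

/-- The degree-`D` Schmüdgen-type hierarchy `H*(GEN, 𝒢, D)`. -/
def HSch {n : ℕ} (GEN : Set (MvPolynomial (Fin n) ℝ))
    (G : Finset (MvPolynomial (Fin n) ℝ)) (D : ℕ) : Set (MvPolynomial (Fin n) ℝ) :=
  {f | ∃ (k : ℕ) (s g : Fin k → MvPolynomial (Fin n) ℝ),
    (∀ i, s i ∈ GEN) ∧ (∀ i, g i ∈ preprime G) ∧
    (∀ i, (s i * g i).totalDegree ≤ D) ∧ f = ∑ i, s i * g i}

/-- `bound(f, GEN, 𝒢, D)` for the Putinar-type hierarchy, valued in `EReal`. -/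
def boundPut {n : ℕ} (f : MvPolynomial (Fin n) ℝ) (GEN : Set (MvPolynomial (Fin n) ℝ))
    (G : Finset (MvPolynomial (Fin n) ℝ)) (D : ℕ) : EReal :=
  sSup {x : EReal | ∃ lam : ℝ, x = (lam : EReal) ∧ f - C lam ∈ HPut GEN G D}

/-- `boundSch(f, GEN, 𝒢, D)` for the Schmüdgen-type hierarchy, valued in `EReal`. -/
def boundSch {n : ℕ} (f : MvPolynomial (Fin n) ℝ) (GEN : Set (MvPolynomial (Fin n) ℝ))
    (G : Finset (MvPolynomial (Fin n) ℝ)) (D : ℕ) : EReal :=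
  sSup {x : EReal | ∃ lam : ℝ, x = (lam : EReal) ∧ f - C lam ∈ HSch GEN G D}

/-- Putinar-type Sherali-Adams hierarchy with the SA degree convention
`deg p_i ≤ ⌊(D − deg g_i)/2⌋`, encoded as `2·deg p_i + deg g_i ≤ D`. -/
def HPutSA {n : ℕ} (G : Finset (MvPolynomial (Fin n) ℝ)) (D : ℕ) :
    Set (MvPolynomial (Fin n) ℝ) :=
  {f | ∃ (k : ℕ) (p g : Fin k → MvPolynomial (Fin n) ℝ),
    (∀ i, p i ∈ SAset n) ∧ (∀ i, g i ∈ G) ∧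
    (∀ i, 2 * (p i).totalDegree + (g i).totalDegree ≤ D) ∧ f = ∑ i, p i * g i}

/-- Schmüdgen-type Sherali-Adams hierarchy with the SA degree convention. -/
def HSchSA {n : ℕ} (G : Finset (MvPolynomial (Fin n) ℝ)) (D : ℕ) :
    Set (MvPolynomial (Fin n) ℝ) :=
  {f | ∃ (k : ℕ) (p g : Fin k → MvPolynomial (Fin n) ℝ),
    (∀ i, p i ∈ SAset n) ∧ (∀ i, g i ∈ preprime G) ∧
    (∀ i, 2 * (p i).totalDegree + (g i).totalDegree ≤ D) ∧ f = ∑ i, p i * g i}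

/-- `bound(f, 𝕊𝔸, 𝒢, D)`. -/
def boundPutSA {n : ℕ} (f : MvPolynomial (Fin n) ℝ)
    (G : Finset (MvPolynomial (Fin n) ℝ)) (D : ℕ) : EReal :=
  sSup {x : EReal | ∃ lam : ℝ, x = (lam : EReal) ∧ f - C lam ∈ HPutSA G D}

/-- `boundSch(f, 𝕊𝔸, 𝒢, D)`. -/
def boundSchSA {n : ℕ} (f : MvPolynomial (Fin n) ℝ)
    (G : Finset (MvPolynomial (Fin n) ℝ)) (D : ℕ) : EReal :=
  sSup {x : EReal | ∃ lam : ℝ, x = (lam : EReal) ∧ f - C lam ∈ HSchSA G D}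

end

theorem Real.eq_of_sum_eq_card_mul_of_prod_eq_pow {ι : Type*} (s : Finset ι) {z : ι → ℝ}
    {P : ℝ} (hz : ∀ i ∈ s, 0 ≤ z i) (hP : 0 ≤ P) (hsum : ∑ i ∈ s, z i = #s * P)
    (hprod : ∏ i ∈ s, z i = P ^ #s) : ∀ i ∈ s, z i = P := by
  rcases s.eq_empty_or_nonempty with rfl | hs
  · simp
  have hcard : (#s : ℝ) ≠ 0 := by exact_mod_cast hs.card_ne_zero
  have hgeom : ∏ i ∈ s, z i ^ (#s : ℝ)⁻¹ = P := by
    rw [Real.finsetProd_rpow s z hz, hprod, Real.pow_rpow_inv_natCast hP hs.card_ne_zero]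
  have harith : ∑ i ∈ s, (#s : ℝ)⁻¹ * z i = P := by
    rw [← mul_sum, hsum, inv_mul_cancel_left₀ hcard]
  have hmeans := (Real.geom_mean_eq_arith_mean_weighted_iff_of_pos' s (fun _ ↦ (#s : ℝ)⁻¹) z
    (fun _ _ ↦ by positivity) (by simp [hcard]) hz).mp (hgeom.trans harith.symm)
  simpa only [harith] using hmeans

lemma eval_Motzkin (n : ℕ) (x : Fin n → ℝ) :
    eval x (Motzkin n) = 1 + ∑ j, (∏ i, x i ^ 2) * x j ^ 2 - ((n : ℝ) + 1) * ∏ i, x i ^ 2 := by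
  have hmon : ∀ j, eval x (monomial (expMotz n j) (1 : ℝ)) = (∏ i, x i ^ 2) * x j ^ 2 := by
    intro j
    have hexp : ∀ i, x i ^ expMotz n j i = x i ^ 2 * if i = j then x i ^ 2 else 1 := by
      intro i
      by_cases h : i = j <;> simp [expMotz, h, ← pow_add]
    rw [eval_monomial, one_mul, Finsupp.prod_fintype _ _ fun i ↦ pow_zero (x i)]
    simp only [hexp, prod_mul_distrib, prod_ite_eq', mem_univ, if_true]
  have htwoE : eval x (monomial (twoE n) ((n : ℝ) + 1)) = ((n : ℝ) + 1) * ∏ i, x i ^ 2 := by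
    rw [eval_monomial, Finsupp.prod_fintype _ _ fun i ↦ pow_zero (x i)]
    simp [twoE]
  rw [Motzkin, map_sub, htwoE, map_add, map_one, map_sum]
  simp only [hmon]

lemma eval_Motzkin_eq_zero_iff (n : ℕ) (x : Fin n → ℝ) :
    eval x (Motzkin n) = 0 ↔ ∀ i, x i ^ 2 = 1 := by
  rw [eval_Motzkin]
  set P := ∏ i, x i ^ 2 with hP
  constructor
  · intro h
    -- `M_n(x)` is the AM-GM gap of the `n + 1` numbers `1, P x₁², …, P xₙ²`, of product `P ^ (n+1)`.
    set z : Fin (n + 1) → ℝ := Fin.cons 1 fun j ↦ P * x j ^ 2 with hz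
    have hz_nonneg : ∀ k ∈ univ, 0 ≤ z k := fun k _ ↦
      Fin.cases (by simp [hz]) (fun j ↦ by simp only [hz, Fin.cons_succ, hP]; positivity) k
    have hsum : ∑ k, z k = #(univ : Finset (Fin (n + 1))) * P := by
      simp only [hz, Fin.sum_cons, card_univ, Fintype.card_fin]
      push_cast
      linarith
    have hprod : ∏ k, z k = P ^ #(univ : Finset (Fin (n + 1))) := by
      rw [hz, Fin.prod_cons, one_mul, prod_mul_distrib, prod_const, ← hP]
      simp only [card_univ, Fintype.card_fin, pow_succ]
    have hzP := Real.eq_of_sum_eq_card_mul_of_prod_eq_pow univ hz_nonneg (by positivity) hsum hprod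
    have hP1 : P = 1 := by simpa [hz] using (hzP 0 (mem_univ _)).symm
    intro i
    simpa [hz, hP1] using hzP i.succ (mem_univ _)
  · intro h
    simp only [hP, h, prod_const_one, sum_const, card_univ, Fintype.card_fin,
      nsmul_eq_mul, mul_one]
    ring

theorem motzkin_zero_set_general (n : ℕ) :
    {x : Fin n → ℝ | MvPolynomial.eval x (Motzkin n) = 0}
      = {x : Fin n → ℝ | ∀ i, x i = -1 ∨ x i = 1} := by
  ext x
  simp only [Set.mem_ofPred_eq, eval_Motzkin_eq_zero_iff, sq_eq_one_iff, or_comm]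

/-- For every `n ≥ 2`, the real zero set of the generalized Motzkin
polynomial is exactly `{−1,1}ⁿ`. -/
theorem motzkin_zero_set (n : ℕ) (hn : 2 ≤ n) :
    {x : Fin n → ℝ | MvPolynomial.eval x (Motzkin n) = 0}
      = {x : Fin n → ℝ | ∀ i, x i = -1 ∨ x i = 1} :=
  motzkin_zero_set_general n
end

section
/- For every n ≥ 2 and every t ≥ 1 there exists a finite constraint set 𝒢 = {g₀ = 1, g₁, …, g_s} ⊂ ℝ[x₁,…,xₙ] with each deg(g_i) ≥ t+1 for i ∈ [s], with 𝒢₊ compact and {−1,1}ⁿ ⊆ 𝒢₊, such that the generalized Motzkin polynomial M_n lies in the degree-(2n+2) Putinar-type SONC hierarchy H(𝕊𝕆ℕℂ, 𝒢, 2n+2) (indeed M_n is itself a nonnegative circuit polynomial), but M_n does not lie in the degree-t Schmüdgen-type SOS hierarchy H*(𝕊𝕆𝕊, 𝒢, t). In particular H(𝕊𝕆ℕℂ, 𝒢, 2n+2) ⊄ H*(𝕊𝕆𝕊, 𝒢, t). -/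
open MvPolynomial Finset

/-!
Take `𝒢 = {1, g}` with `g = n + 1 - ∑ xᵢ ^ (2(t+1))`: its feasibility set is a compact
`ℓ^(2t+2)`-ball containing `{-1, 1}ⁿ`. The exponents `0, 2(e + e_j)` of `M_n` are the vertices
of a simplex with barycentre `2e`, and `M_n ≥ 0` by AM-GM, so `M_n = M_n · g₀` is in the SONC
hierarchy. Every preprime element is a polynomial in `g`; if its degree is `≤ t < deg g` it is a
constant, nonnegative on `𝒢₊`. Hence `H*(𝕊𝕆𝕊, 𝒢, t)` consists of sums of squares, but `M_n` is
not one: in `M_n = ∑ pᵢ²` every exponent of a `pᵢ` lies in half the Newton polytope of `M_n`,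
so `x^(2e)` arises only as `x^e · x^e`, and its coefficient would be `∑ coeff_e(pᵢ)² ≥ 0`
rather than `-(n + 1)`.
-/

namespace MvPolynomial

variable {σ : Type*}

theorem weightedHomogeneousComponent_mul_of_weight_le {M R : Type*} [AddCommMonoid M]
    [LinearOrder M] [IsOrderedCancelAddMonoid M] [CommSemiring R] {w : σ → M}
    {f g : MvPolynomial σ R} {p q : M} (hf : ∀ d ∈ f.support, Finsupp.weight w d ≤ p)
    (hg : ∀ d ∈ g.support, Finsupp.weight w d ≤ q) :
    weightedHomogeneousComponent w (p + q) (f * g) =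
      weightedHomogeneousComponent w p f * weightedHomogeneousComponent w q g := by
  classical
  ext d
  rw [coeff_weightedHomogeneousComponent]
  split_ifs with hd
  · rw [coeff_mul, coeff_mul]
    refine Finset.sum_congr rfl fun x hx => ?_
    rw [Finset.HasAntidiagonal.mem_antidiagonal] at hx
    rw [← hx, map_add] at hd
    simp only [coeff_weightedHomogeneousComponent]
    rcases trichotomy_of_add_eq_add hd with h | h | h
    · rw [if_pos h.1, if_pos h.2]
    · have h2 : q < Finsupp.weight w x.2 := by
        by_contra! h'
        exact (add_lt_add_of_lt_of_le h h').ne hd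
      rw [if_neg h.ne, zero_mul, notMem_support_iff.1 fun hx2 => (hg _ hx2).not_gt h2, mul_zero]
    · have h1 : p < Finsupp.weight w x.1 := by
        by_contra! h'
        exact (add_lt_add_of_le_of_lt h' h).ne hd
      rw [if_neg h.ne, mul_zero, notMem_support_iff.1 fun hx1 => (hf _ hx1).not_gt h1, zero_mul]
  · symm
    exact ((weightedHomogeneousComponent_isWeightedHomogeneous p f).mul
      (weightedHomogeneousComponent_isWeightedHomogeneous q g)).coeff_eq_zero d hd

theorem sum_sq_eq_zero_iff {ι : Type*} {s : Finset ι} {p : ι → MvPolynomial σ ℝ} :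
    ∑ i ∈ s, p i ^ 2 = 0 ↔ ∀ i ∈ s, p i = 0 := by
  refine ⟨fun h i hi => funext fun x => ?_,
    fun h => Finset.sum_eq_zero fun i hi => by simp [h i hi]⟩
  have hx := congrArg (eval x) h
  rw [map_sum, map_zero,
    Finset.sum_eq_zero_iff_of_nonneg fun j _ => by rw [map_pow]; positivity] at hx
  simpa using hx i hi

/-- Reznick's half-Newton-polytope principle, tested against the functional `weight w`: the top
`w`-component of `∑ pⱼ²` is the sum of the squares of the top components of the `pⱼ`, and these
cannot cancel over `ℝ`. -/
theorem exists_mem_support_sum_sq_two_nsmul_weight_le {ι M : Type*} [AddCommMonoid M]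
    [LinearOrder M] [IsOrderedCancelAddMonoid M] (w : σ → M) {s : Finset ι}
    {p : ι → MvPolynomial σ ℝ} {i : ι} (hi : i ∈ s) {d : σ →₀ ℕ} (hd : d ∈ (p i).support) :
    ∃ e ∈ (∑ j ∈ s, p j ^ 2).support, 2 • Finsupp.weight w d ≤ Finsupp.weight w e := by
  classical
  obtain ⟨m, hmA, hmax⟩ := (s.biUnion fun j => (p j).support).exists_max_image
    (Finsupp.weight w) ⟨d, Finset.mem_biUnion.2 ⟨i, hi, hd⟩⟩
  obtain ⟨k, hk, hmk⟩ := Finset.mem_biUnion.1 hmA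
  set W := Finsupp.weight w m
  have hbound : ∀ j ∈ s, ∀ d' ∈ (p j).support, Finsupp.weight w d' ≤ W :=
    fun j hj d' hd' => hmax d' (Finset.mem_biUnion.2 ⟨j, hj, hd'⟩)
  have htop : weightedHomogeneousComponent w (W + W) (∑ j ∈ s, p j ^ 2) =
      ∑ j ∈ s, weightedHomogeneousComponent w W (p j) ^ 2 := by
    rw [map_sum]
    refine Finset.sum_congr rfl fun j hj => ?_
    rw [sq, sq, weightedHomogeneousComponent_mul_of_weight_le (hbound j hj) (hbound j hj)]
  have hne : weightedHomogeneousComponent w (W + W) (∑ j ∈ s, p j ^ 2) ≠ 0 := by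
    rw [htop, Ne, sum_sq_eq_zero_iff]
    intro h0
    have hm := congrArg (coeff m) (h0 k hk)
    rw [coeff_weightedHomogeneousComponent, if_pos rfl, coeff_zero] at hm
    exact mem_support_iff.1 hmk hm
  obtain ⟨e, he⟩ := support_nonempty.2 hne
  rw [support_weightedHomogeneousComponent, Finset.mem_filter] at he
  refine ⟨e, he.1, ?_⟩
  rw [he.2, two_nsmul]
  exact add_le_add (hbound i hi d hd) (hbound i hi d hd)

variable {R : Type*} [CommRing R] [IsDomain R]

/-- `degreeOf a` is the degree in `X a` over the remaining variables, and composing univariate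
polynomials multiplies degrees. -/
theorem degreeOf_aeval (a : σ) (g : MvPolynomial σ R) (q : Polynomial R) :
    degreeOf a (Polynomial.aeval g q) = q.natDegree * degreeOf a g := by
  classical
  let Φ := (optionEquivLeft R {b // b ≠ a}).toAlgHom.comp (rename (Equiv.optionSubtypeNe a).symm)
  rw [degreeOf_eq_natDegree, degreeOf_eq_natDegree]
  change (Φ (Polynomial.aeval g q)).natDegree = q.natDegree * (Φ g).natDegree
  rw [← Polynomial.aeval_algHom_apply,
    ← Polynomial.aeval_map_algebraMap (MvPolynomial {b // b ≠ a} R), ← Polynomial.comp_eq_aeval,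
    Polynomial.natDegree_comp, algebraMap_eq,
    Polynomial.natDegree_map_eq_of_injective (C_injective _ _)]

theorem exists_eq_C_of_mem_adjoin_of_totalDegree_lt {g p : MvPolynomial σ R}
    (hp : p ∈ Algebra.adjoin R {g}) (a : σ) (hdeg : p.totalDegree < degreeOf a g) :
    ∃ c, p = C c := by
  rw [Algebra.adjoin_singleton_eq_range_aeval] at hp
  obtain ⟨q, rfl⟩ := (AlgHom.mem_range _).1 hp
  have hq : q.natDegree = 0 := by
    by_contra hq
    have := degreeOf_le_totalDegree (Polynomial.aeval g q) a
    rw [degreeOf_aeval] at this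
    nlinarith [Nat.one_le_iff_ne_zero.2 hq]
  obtain ⟨c, rfl⟩ := Polynomial.natDegree_eq_zero.1 hq
  exact ⟨c, by simp⟩

end MvPolynomial

theorem Real.card_mul_le_sum_of_prod_eq_pow {ι : Type*} {s : Finset ι} (hs : s.Nonempty)
    {z : ι → ℝ} (hz : ∀ i ∈ s, 0 ≤ z i) {u : ℝ} (hu : 0 ≤ u) (hprod : ∏ i ∈ s, z i = u ^ #s) :
    #s * u ≤ ∑ i ∈ s, z i := by
  have hamgm := Real.geom_mean_le_arith_mean_weighted s (fun _ => (#s : ℝ)⁻¹) z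
    (fun _ _ => by positivity) (by simp [hs.card_ne_zero]) hz
  rw [Real.finsetProd_rpow s z hz, hprod, Real.pow_rpow_inv_natCast hu hs.card_ne_zero,
    ← Finset.mul_sum] at hamgm
  rwa [le_inv_mul_iff₀ (by simp [Finset.card_pos.2 hs])] at hamgm

theorem affineIndependent_cons_zero_iff {k V : Type*} [Ring k] [AddCommGroup V] [Module k V]
    {m : ℕ} (v : Fin m → V) :
    AffineIndependent k (Fin.cons 0 v : Fin (m + 1) → V) ↔ LinearIndependent k v := by
  rw [affineIndependent_iff_linearIndependent_vsub k _ 0,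
    ← linearIndependent_equiv (finSuccAboveEquiv 0)]
  have hv : (fun i : {x : Fin (m + 1) // x ≠ 0} =>
      (Fin.cons 0 v : Fin (m + 1) → V) i -ᵥ (Fin.cons 0 v : Fin (m + 1) → V) 0) ∘
        finSuccAboveEquiv 0 = v := by
    ext j
    simp [finSuccAboveEquiv_apply]
  rw [hv]

theorem mem_SOSset_iff_isSumSq {n : ℕ} {f : MvPolynomial (Fin n) ℝ} :
    f ∈ SOSset n ↔ IsSumSq f := by
  constructor
  · rintro ⟨k, p, rfl⟩
    exact IsSumSq.sum_sq _ _
  · intro h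
    induction h with
    | zero => exact ⟨0, Fin.elim0, by simp⟩
    | sq_add a _ ih =>
      obtain ⟨k, p, rfl⟩ := ih
      exact ⟨k + 1, Fin.cons a p, by simp [Fin.sum_univ_succ, sq]⟩

section Motzkin

variable {n : ℕ}

@[simp] theorem eAll_apply (i : Fin n) : eAll n i = 1 := rfl

@[simp] theorem twoE_apply (i : Fin n) : twoE n i = 2 := rfl

theorem expMotz_apply (j i : Fin n) : expMotz n j i = if i = j then 4 else 2 := rfl

theorem expMotz_eq_add (j : Fin n) : expMotz n j = twoE n + Finsupp.single j 2 := by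
  ext i
  simp only [expMotz_apply, Finsupp.add_apply, twoE_apply, Finsupp.single_apply]
  split_ifs <;> simp_all [eq_comm]

theorem degree_twoE : (twoE n).degree = 2 * n := by
  simp [Finsupp.degree_eq_sum, mul_comm]

theorem degree_expMotz (j : Fin n) : (expMotz n j).degree = 2 * n + 2 := by
  simp [expMotz_eq_add, degree_twoE]

theorem monomial_twoE (c : ℝ) : monomial (twoE n) c = C c * (∏ i, X i) ^ 2 := by
  rw [monomial_eq, Finsupp.prod_fintype _ _ (by simp), ← Finset.prod_pow]
  simp

theorem monomial_expMotz (j : Fin n) :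
    monomial (expMotz n j) (1 : ℝ) = (∏ i, X i) ^ 2 * X j ^ 2 := by
  rw [expMotz_eq_add, ← one_mul (1 : ℝ), ← monomial_mul, monomial_twoE, ← X_pow_eq_monomial,
    C_1, one_mul]

theorem motzkin_eq : Motzkin n =
    1 + ∑ j, (∏ i, X i) ^ 2 * X j ^ 2 - C ((n : ℝ) + 1) * (∏ i, X i) ^ 2 := by
  simp only [Motzkin, monomial_expMotz, monomial_twoE]

theorem eval_motzkin (x : Fin n → ℝ) : eval x (Motzkin n) =
    1 + ∑ j, (∏ i, x i) ^ 2 * x j ^ 2 - (n + 1) * (∏ i, x i) ^ 2 := by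
  simp [motzkin_eq]

theorem motzkin_nonneg (x : Fin n → ℝ) : 0 ≤ eval x (Motzkin n) := by
  set u := (∏ i, x i) ^ 2
  have hamgm := Real.card_mul_le_sum_of_prod_eq_pow (s := Finset.univ)
    (z := Fin.cons 1 fun j => u * x j ^ 2) (u := u) Finset.univ_nonempty
    (fun i _ => Fin.cases (by simp) (fun j => by simp [u]; positivity) i) (sq_nonneg _)
    (by simp [Fin.prod_univ_succ, Finset.prod_mul_distrib, u, pow_succ])
  simp only [Finset.card_univ, Fintype.card_fin, Fin.sum_univ_succ, Fin.cons_zero,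
    Fin.cons_succ] at hamgm
  push_cast at hamgm
  rw [eval_motzkin]
  linarith

theorem linearIndependent_expMotz : LinearIndependent ℝ fun j i => (expMotz n j i : ℝ) := by
  rw [Fintype.linearIndependent_iff]
  intro g hg i
  have hcoord (i : Fin n) : 2 * ∑ j, g j + 2 * g i = 0 := by
    simpa [Finset.sum_apply, expMotz_eq_add, Finsupp.single_apply, mul_add,
      Finset.sum_add_distrib, ← Finset.sum_mul, mul_comm] using congrFun hg i
  have hsum : ∑ j, (2 * ∑ k, g k + 2 * g j) = 0 := Finset.sum_eq_zero fun j _ => hcoord j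
  simp only [Finset.sum_add_distrib, ← Finset.mul_sum, Finset.sum_const, Finset.card_univ,
    Fintype.card_fin, nsmul_eq_mul] at hsum
  have hS : ((n : ℝ) + 1) * ∑ j, g j = 0 := by linarith
  have := hcoord i
  rw [(mul_eq_zero.1 hS).resolve_left (by positivity)] at this
  linarith

theorem isCircuit_motzkin : IsCircuit (Motzkin n) := by
  right
  refine ⟨n, le_rfl, Fin.cons 0 (expMotz n), fun _ => 1, twoE n, -((n : ℝ) + 1),
    fun _ => ((n : ℝ) + 1)⁻¹, fun _ => one_pos, fun j i => ?_, ?_, fun _ => by positivity, ?_,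
    fun i => ?_, ?_⟩
  · cases j using Fin.cases
    · simp
    · simp only [Fin.cons_succ, expMotz_apply]
      split_ifs <;> decide
  · have hα : (fun j i => ((Fin.cons 0 (expMotz n) : Fin (n + 1) → Fin n →₀ ℕ) j i : ℝ)) =
        Fin.cons 0 fun j i => (expMotz n j i : ℝ) := by
      ext j i
      cases j using Fin.cases <;> simp
    rw [hα, affineIndependent_cons_zero_iff]
    exact linearIndependent_expMotz
  · simp
    field_simp
  · simp [Fin.sum_univ_succ, expMotz_eq_add, Finsupp.single_apply, ← Finset.mul_sum,
      Finset.sum_add_distrib]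
    field_simp
  · simp [Motzkin, Fin.sum_univ_succ]
    ring

theorem motzkin_mem_SONCset : Motzkin n ∈ SONCset n :=
  ⟨1, fun _ => 1, fun _ => Motzkin n, fun _ => zero_le_one,
    fun _ => ⟨isCircuit_motzkin, motzkin_nonneg⟩, by simp⟩

theorem mem_support_motzkin {d : Fin n →₀ ℕ} (hd : d ∈ (Motzkin n).support) :
    d = 0 ∨ d = twoE n ∨ ∃ j, d = expMotz n j := by
  by_contra! h
  obtain ⟨h0, h2, hj⟩ := h
  refine mem_support_iff.1 hd ?_
  simp [Motzkin, coeff_one, coeff_monomial, coeff_sum, Ne.symm h0, Ne.symm h2,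
    fun j => Ne.symm (hj j)]

theorem coeff_twoE_motzkin (hn : n ≠ 0) : coeff (twoE n) (Motzkin n) = -(n + 1) := by
  have h0 : twoE n ≠ 0 := fun h => by
    have := degree_twoE (n := n)
    simp_all
  have hj (j : Fin n) : expMotz n j ≠ twoE n := fun h => by
    have := degree_expMotz j
    simp_all [degree_twoE]
  simp [Motzkin, coeff_one, coeff_monomial, coeff_sum, Ne.symm h0, hj]

/-- Lattice points of `r • conv {0, e + e₁, …, e + eₙ}`, described by its facet inequalities:
`r = 2` gives the Newton polytope of `M_n`, `r = 1` half of it. -/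
def motzkinSimplex (n r : ℕ) : Set (Fin n →₀ ℕ) :=
  {d | d.degree ≤ r * (n + 1) ∧ ∀ j, d.degree ≤ (n + 1) * d j}

theorem support_motzkin_subset : ↑(Motzkin n).support ⊆ motzkinSimplex n 2 := by
  intro d hd
  rcases mem_support_motzkin hd with rfl | rfl | ⟨k, rfl⟩
  · simp [motzkinSimplex]
  · refine ⟨?_, fun j => ?_⟩ <;> simp only [degree_twoE, twoE_apply] <;> linarith
  · refine ⟨by rw [degree_expMotz]; linarith, fun j => ?_⟩
    rw [degree_expMotz, expMotz_apply]
    split_ifs <;> linarith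

theorem totalDegree_motzkin_le : (Motzkin n).totalDegree ≤ 2 * n + 2 :=
  Finset.sup_le fun _ hd => (support_motzkin_subset hd).1.trans_eq (by ring)

theorem motzkin_mem_HPut {G : Finset (MvPolynomial (Fin n) ℝ)} (hG : 1 ∈ G) :
    Motzkin n ∈ HPut (SONCset n) G (2 * n + 2) :=
  ⟨1, fun _ => Motzkin n, fun _ => 1, fun _ => motzkin_mem_SONCset, fun _ => hG,
    fun _ => by simpa using totalDegree_motzkin_le, by simp⟩

theorem support_subset_motzkinSimplex_of_eq_sum_sq {ι : Type*} {r : ℕ}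
    {f : MvPolynomial (Fin n) ℝ} (hf : ↑f.support ⊆ motzkinSimplex n (2 * r))
    {s : Finset ι} {p : ι → MvPolynomial (Fin n) ℝ} (h : f = ∑ i ∈ s, p i ^ 2) {i : ι}
    (hi : i ∈ s) : ↑(p i).support ⊆ motzkinSimplex n r := by
  intro d hd
  refine ⟨?_, fun j => ?_⟩
  · obtain ⟨e, he, hle⟩ :=
      exists_mem_support_sum_sq_two_nsmul_weight_le (fun _ => (1 : ℕ)) hi hd
    rw [← h] at he
    rw [← Finsupp.degree_eq_weight_one, smul_eq_mul] at hle
    linarith [(hf he).1]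
  · set w : Fin n → ℤ := fun i => 1 - if i = j then (n + 1 : ℤ) else 0
    have hw (d : Fin n →₀ ℕ) : Finsupp.weight w d = d.degree - (n + 1) * d j := by
      simp [w, Finsupp.weight_apply, Finsupp.sum_fintype, Finsupp.degree_eq_sum, mul_sub,
        Finset.sum_sub_distrib, mul_comm]
    obtain ⟨e, he, hle⟩ := exists_mem_support_sum_sq_two_nsmul_weight_le w hi hd
    rw [← h] at he
    rw [hw, hw, two_nsmul] at hle
    have he' : (e.degree : ℤ) ≤ (n + 1) * e j := by exact_mod_cast (hf he).2 j
    zify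
    linarith

theorem ne_zero_of_add_eq_twoE (hn : 2 ≤ n) {a b : Fin n →₀ ℕ} (ha : a ∈ motzkinSimplex n 1)
    (hb : b ∈ motzkinSimplex n 1) (hab : a + b = twoE n) (j : Fin n) : a j ≠ 0 := by
  intro haj
  have ha0 : a.degree = 0 := by simpa [haj] using ha.2 j
  have hsum : a.degree + b.degree = 2 * n := by rw [← map_add, hab, degree_twoE]
  have := hb.1
  omega

theorem eq_eAll_of_add_eq_twoE (hn : 2 ≤ n) {a b : Fin n →₀ ℕ} (ha : a ∈ motzkinSimplex n 1)
    (hb : b ∈ motzkinSimplex n 1) (hab : a + b = twoE n) : a = eAll n := by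
  ext j
  have hj : a j + b j = 2 := by simpa using congrArg (· j) hab
  have := ne_zero_of_add_eq_twoE hn ha hb hab j
  have := ne_zero_of_add_eq_twoE hn hb ha (by rwa [add_comm]) j
  simp only [eAll_apply]
  omega

theorem coeff_twoE_sq (hn : 2 ≤ n) {p : MvPolynomial (Fin n) ℝ}
    (hp : ↑p.support ⊆ motzkinSimplex n 1) : coeff (twoE n) (p ^ 2) = coeff (eAll n) p ^ 2 := by
  rw [sq, coeff_mul, Finset.sum_eq_single (eAll n, eAll n), sq]
  · intro x hx hne
    by_contra hz
    have h1 := hp (mem_support_iff.2 (left_ne_zero_of_mul hz))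
    have h2 := hp (mem_support_iff.2 (right_ne_zero_of_mul hz))
    rw [Finset.HasAntidiagonal.mem_antidiagonal] at hx
    exact hne (Prod.ext (eq_eAll_of_add_eq_twoE hn h1 h2 hx)
      (eq_eAll_of_add_eq_twoE hn h2 h1 (by rwa [add_comm])))
  · intro h
    exact absurd (Finset.HasAntidiagonal.mem_antidiagonal.2 (by ext; simp)) h

theorem motzkin_not_mem_SOSset (hn : 2 ≤ n) : Motzkin n ∉ SOSset n := by
  rintro ⟨k, p, h⟩
  have hcoeff := congrArg (coeff (twoE n)) h
  rw [coeff_twoE_motzkin (by omega), coeff_sum, Finset.sum_congr rfl fun i _ => coeff_twoE_sq hn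
    (support_subset_motzkinSimplex_of_eq_sum_sq support_motzkin_subset h (Finset.mem_univ i))]
    at hcoeff
  linarith [Finset.sum_nonneg fun i (_ : i ∈ Finset.univ) => sq_nonneg (coeff (eAll n) (p i))]

end Motzkin

section Constraints

variable {n : ℕ}

theorem preprime_subset_adjoin (G : Finset (MvPolynomial (Fin n) ℝ)) :
    preprime G ⊆ Algebra.adjoin ℝ (G : Set (MvPolynomial (Fin n) ℝ)) := by
  rintro _ ⟨k, c, e, -, rfl⟩
  exact Subalgebra.sum_mem _ fun i _ => Subalgebra.smul_mem _
    (Subalgebra.prod_mem _ fun g hg => Subalgebra.pow_mem _ (Algebra.subset_adjoin hg) _) _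

theorem eval_nonneg_of_mem_preprime {G : Finset (MvPolynomial (Fin n) ℝ)}
    {p : MvPolynomial (Fin n) ℝ} (hp : p ∈ preprime G) {x : Fin n → ℝ} (hx : x ∈ feasSet G) :
    0 ≤ eval x p := by
  obtain ⟨k, c, e, hc, rfl⟩ := hp
  simp only [map_sum, smul_eval, map_prod, map_pow]
  exact Finset.sum_nonneg fun i _ =>
    mul_nonneg (hc i) (Finset.prod_nonneg fun g hg => pow_nonneg (hx g hg) _)

theorem isClosed_feasSet (G : Finset (MvPolynomial (Fin n) ℝ)) : IsClosed (feasSet G) := by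
  simp only [feasSet, Set.ofPred_forall]
  exact isClosed_biInter fun g _ => isClosed_le continuous_const (continuous_eval g)

theorem hSch_SOSset_subset {G : Finset (MvPolynomial (Fin n) ℝ)} {t : ℕ}
    (hconst : ∀ h ∈ preprime G, h.totalDegree ≤ t → ∃ c, h = C c) (hG : (feasSet G).Nonempty) :
    HSch (SOSset n) G t ⊆ SOSset n := by
  rintro _ ⟨k, s, g, hs, hg, hdeg, rfl⟩
  rw [mem_SOSset_iff_isSumSq]
  refine IsSumSq.sum fun i _ => ?_
  by_cases hs0 : s i = 0
  · simp [hs0]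
  have hgdeg : (g i).totalDegree ≤ t := by
    by_cases hg0 : g i = 0
    · simp [hg0]
    · have := totalDegree_mul_of_isDomain hs0 hg0 ▸ hdeg i
      omega
  obtain ⟨c, hc⟩ := hconst _ (hg i) hgdeg
  obtain ⟨x, hx⟩ := hG
  have hc0 : 0 ≤ c := by simpa [hc] using eval_nonneg_of_mem_preprime (hg i) hx
  rw [hc]
  exact (mem_SOSset_iff_isSumSq.1 (hs i)).mul
    (IsSquare.isSumSq ⟨C √c, by rw [← map_mul, Real.mul_self_sqrt hc0]⟩)

noncomputable def ballConstraint (n k : ℕ) : MvPolynomial (Fin n) ℝ :=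
  C ((n : ℝ) + 1) - ∑ i, X i ^ (2 * k)

theorem eval_ballConstraint (k : ℕ) (x : Fin n → ℝ) :
    eval x (ballConstraint n k) = n + 1 - ∑ i, x i ^ (2 * k) := by
  simp [ballConstraint]

theorem le_degreeOf_ballConstraint {k : ℕ} (hk : k ≠ 0) (a : Fin n) :
    2 * k ≤ degreeOf a (ballConstraint n k) := by
  have h2k : 2 * k ≠ 0 := by omega
  have hmem : Finsupp.single a (2 * k) ∈ (ballConstraint n k).support := by
    rw [mem_support_iff, ballConstraint, coeff_sub, coeff_C,
      if_neg (Finsupp.single_ne_zero.2 h2k).symm, coeff_sum]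
    simp [X_pow_eq_monomial, coeff_monomial]
  simpa using le_degreeOf_of_mem_support a hmem

theorem isCompact_feasSet_of_ballConstraint_mem {G : Finset (MvPolynomial (Fin n) ℝ)} {k : ℕ}
    (hk : k ≠ 0) (hG : ballConstraint n k ∈ G) : IsCompact (feasSet G) := by
  refine Metric.isCompact_of_isClosed_isBounded (isClosed_feasSet G)
    (isBounded_iff_forall_norm_le.2 ⟨n + 1, fun x hx => ?_⟩)
  have hsum := hx _ hG
  rw [eval_ballConstraint] at hsum
  refine (pi_norm_le_iff_of_nonneg (by positivity)).2 fun i => ?_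
  have hpow : ∀ j, 0 ≤ x j ^ (2 * k) := fun j => by rw [pow_mul]; positivity
  have hxi : |x i| ^ (2 * k) ≤ n + 1 := by
    rw [pow_abs, abs_of_nonneg (hpow i)]
    linarith [Finset.single_le_sum (fun j _ => hpow j) (Finset.mem_univ i)]
  rw [Real.norm_eq_abs]
  by_contra! hlt
  have h1 : 1 ≤ |x i| := by linarith [(n.cast_nonneg : (0 : ℝ) ≤ n)]
  linarith [le_self_pow₀ h1 (by omega : 2 * k ≠ 0)]

theorem signVectors_subset_feasSet_ballConstraint (k : ℕ) :
    {x : Fin n → ℝ | ∀ i, x i = -1 ∨ x i = 1} ⊆ feasSet {1, ballConstraint n k} := by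
  intro x hx
  have hpow (i : Fin n) : x i ^ (2 * k) = 1 := by
    rcases hx i with h | h <;> simp [h, pow_mul]
  simp [feasSet, eval_ballConstraint, hpow]

theorem exists_eq_C_of_mem_preprime_ballConstraint (hn : n ≠ 0) {k t : ℕ} (ht : t < 2 * k)
    {h : MvPolynomial (Fin n) ℝ} (hh : h ∈ preprime {1, ballConstraint n k})
    (hdeg : h.totalDegree ≤ t) : ∃ c, h = C c := by
  have a : Fin n := ⟨0, Nat.pos_of_ne_zero hn⟩
  have hadj := preprime_subset_adjoin _ hh
  rw [Finset.coe_insert, Finset.coe_singleton, Algebra.adjoin_insert_one] at hadj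
  exact exists_eq_C_of_mem_adjoin_of_totalDegree_lt hadj a
    (by linarith [le_degreeOf_ballConstraint (n := n) (by omega : k ≠ 0) a])

end Constraints

theorem sonc_not_contained_in_sos_general (n t : ℕ) (hn : 2 ≤ n) :
    ∃ G : Finset (MvPolynomial (Fin n) ℝ),
      (1 : MvPolynomial (Fin n) ℝ) ∈ G ∧
      (∀ g ∈ G, g ≠ 1 → t + 1 ≤ g.totalDegree) ∧
      IsCompact (feasSet G) ∧
      {x : Fin n → ℝ | ∀ i, x i = -1 ∨ x i = 1} ⊆ feasSet G ∧
      Motzkin n ∈ HPut (SONCset n) G (2 * n + 2) ∧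
      Motzkin n ∉ HSch (SOSset n) G t ∧
      ¬ HPut (SONCset n) G (2 * n + 2) ⊆ HSch (SOSset n) G t := by
  set b := ballConstraint n (t + 1)
  have hcube := signVectors_subset_feasSet_ballConstraint (n := n) (t + 1)
  have hM := motzkin_mem_HPut (Finset.mem_insert_self 1 {b})
  have hM' : Motzkin n ∉ HSch (SOSset n) {1, b} t := fun h => motzkin_not_mem_SOSset hn <|
    hSch_SOSset_subset
      (fun _ hh hdeg => exists_eq_C_of_mem_preprime_ballConstraint (by omega) (by omega) hh hdeg)
      ⟨fun _ => 1, hcube fun _ => Or.inr rfl⟩ h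
  refine ⟨{1, b}, Finset.mem_insert_self _ _, fun g hg hne => ?_,
    isCompact_feasSet_of_ballConstraint_mem (by omega)
      (Finset.mem_insert_of_mem (Finset.mem_singleton_self b)),
    hcube, hM, hM', fun h => hM' (h hM)⟩
  have hgb : g = b := Finset.mem_singleton.1 ((Finset.mem_insert.1 hg).resolve_left hne)
  let a : Fin n := ⟨0, by omega⟩
  calc t + 1 ≤ 2 * (t + 1) := by omega
    _ ≤ degreeOf a b := le_degreeOf_ballConstraint (by omega) a
    _ ≤ g.totalDegree := hgb ▸ degreeOf_le_totalDegree b a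

/-- For every `n ≥ 2` and `t ≥ n+1` there is a constraint set `𝒢`
(containing `g₀ = 1`, all other constraints of degree `≥ t+1`, with compact
feasibility set containing `{−1,1}ⁿ`) such that `M_n` lies in the degree-`(2n+2)`
Putinar-type SONC hierarchy but not in the degree-`t` Schmüdgen-type SOS hierarchy;
in particular `H(𝕊𝕆ℕℂ,𝒢,2n+2) ⊄ H*(𝕊𝕆𝕊,𝒢,t)`. -/
theorem sonc_not_contained_in_sos (n t : ℕ) (hn : 2 ≤ n) (ht : n + 1 ≤ t) :
    ∃ G : Finset (MvPolynomial (Fin n) ℝ),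
      (1 : MvPolynomial (Fin n) ℝ) ∈ G ∧
      (∀ g ∈ G, g ≠ 1 → t + 1 ≤ g.totalDegree) ∧
      IsCompact (feasSet G) ∧
      {x : Fin n → ℝ | ∀ i, x i = -1 ∨ x i = 1} ⊆ feasSet G ∧
      Motzkin n ∈ HPut (SONCset n) G (2 * n + 2) ∧
      Motzkin n ∉ HSch (SOSset n) G t ∧
      ¬ HPut (SONCset n) G (2 * n + 2) ⊆ HSch (SOSset n) G t :=
  sonc_not_contained_in_sos_general n t hn
end

section
/- For every finite constraint set 𝒢 ⊂ ℝ[x₁,…,xₙ], every f ∈ ℝ[x₁,…,xₙ], and every d ∈ ℕ*, the SDSOS hierarchies are contained in the SONC hierarchies: H(𝕊𝔻𝕊𝕆𝕊, 𝒢, 2d) ⊆ H(𝕊𝕆ℕℂ, 𝒢, 2d) and H*(𝕊𝔻𝕊𝕆𝕊, 𝒢, 2d) ⊆ H*(𝕊𝕆ℕℂ, 𝒢, 2d); consequently bound(f, 𝕊𝔻𝕊𝕆𝕊, 𝒢, 2d) ≤ bound(f, 𝕊𝕆ℕℂ, 𝒢, 2d) and boundSch(f, 𝕊𝔻𝕊𝕆𝕊,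 𝒢, 2d) ≤ boundSch(f, 𝕊𝕆ℕℂ, 𝒢, 2d). -/
open MvPolynomial Finset

lemma binom_sq_expand {n : ℕ} (u v : Fin n →₀ ℕ) (a b : ℝ) :
    (monomial u a + monomial v b)^2
      = monomial (2 • u) (a^2) + monomial (u+v) (2*(a*b)) + monomial (2 • v) (b^2) := by
  rw [add_sq, monomial_pow, monomial_pow]
  congr 2
  rw [mul_assoc, monomial_mul, (map_ofNat C 2).symm, C_mul_monomial]

lemma binom_nonneg_circuit {n : ℕ} (u v : Fin n →₀ ℕ) (a b : ℝ) :
    IsNonnegCircuit ((monomial u a + monomial v b)^2) := by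
  constructor
  · by_cases huv : u = v
    · left
      refine ⟨u, (a+b)^2, sq_nonneg _, ?_⟩
      subst huv
      rw [← map_add, monomial_pow]
    by_cases ha : a = 0
    · left
      refine ⟨v, b^2, sq_nonneg _, ?_⟩
      subst ha
      rw [monomial_zero, zero_add, monomial_pow]
    by_cases hb : b = 0
    · left
      refine ⟨u, a^2, sq_nonneg _, ?_⟩
      subst hb
      rw [monomial_zero, add_zero, monomial_pow]
    · right
      have hn : 1 ≤ n := by
        by_contra h
        push_neg at h
        interval_cases n
        exact huv (Finsupp.ext fun i => i.elim0)
      refine ⟨1, hn, ![2 • u, 2 • v], ![a^2, b^2], u + v, 2*(a*b), ![1/2, 1/2],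
        ?_, ?_, ?_, ?_, ?_, ?_, ?_⟩
      · intro j
        fin_cases j <;> simp <;> positivity
      · intro j i
        fin_cases j <;> simp [Finsupp.smul_apply]
      · have h2 : (fun j : Fin 2 => (fun i => ((![2 • u, 2 • v] : Fin 2 → (Fin n →₀ ℕ)) j i : ℝ)))
            = ![(fun i => ((2 • u : Fin n →₀ ℕ) i : ℝ)), (fun i => ((2 • v : Fin n →₀ ℕ) i : ℝ))] := by
          funext j
          fin_cases j <;> rfl
        rw [h2]
        apply affineIndependent_of_ne
        obtain ⟨i, hi⟩ := Finsupp.ne_iff.mp huv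
        intro hcon
        apply hi
        have := congrFun hcon i
        simp [Finsupp.smul_apply] at this
        exact_mod_cast this
      · intro j; fin_cases j <;> norm_num
      · simp [Fin.sum_univ_two]; norm_num
      · intro i
        rw [Fin.sum_univ_two]
        simp only [Finsupp.add_apply, Matrix.cons_val_zero, Matrix.cons_val_one,
          Matrix.head_cons, Finsupp.smul_apply, smul_eq_mul]
        push_cast
        ring
      · rw [binom_sq_expand, Fin.sum_univ_two]
        simp
        ring
  · intro x
    rw [map_pow]
    exact sq_nonneg _

lemma sdsos_subset_sonc (n : ℕ) : SDSOSset n ⊆ SONCset n := by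
  rintro f ⟨k, a, b, u, v, rfl⟩
  exact ⟨k, fun _ => 1, fun i => (monomial (u i) (a i) + monomial (v i) (b i)) ^ 2,
    fun i => zero_le_one, fun i => binom_nonneg_circuit _ _ _ _,
    by simp⟩

lemma hput_mono {n : ℕ} {A B : Set (MvPolynomial (Fin n) ℝ)} (h : A ⊆ B)
    (G : Finset (MvPolynomial (Fin n) ℝ)) (D : ℕ) : HPut A G D ⊆ HPut B G D := by
  rintro f ⟨k, s, g, hs, hg, hdeg, rfl⟩
  exact ⟨k, s, g, fun i => h (hs i), hg, hdeg, rfl⟩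

lemma hsch_mono {n : ℕ} {A B : Set (MvPolynomial (Fin n) ℝ)} (h : A ⊆ B)
    (G : Finset (MvPolynomial (Fin n) ℝ)) (D : ℕ) : HSch A G D ⊆ HSch B G D := by
  rintro f ⟨k, s, g, hs, hg, hdeg, rfl⟩
  exact ⟨k, s, g, fun i => h (hs i), hg, hdeg, rfl⟩

/-- For every constraint set `𝒢`, every `f`, and every `d ≥ 1`, the
SDSOS hierarchies are contained in the SONC hierarchies, and consequently the
associated bounds are ordered accordingly. -/
theorem sdsos_hierarchy_le_sonc (n : ℕ) (G : Finset (MvPolynomial (Fin n) ℝ))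
    (f : MvPolynomial (Fin n) ℝ) (d : ℕ) (hd : 1 ≤ d) :
    HPut (SDSOSset n) G (2 * d) ⊆ HPut (SONCset n) G (2 * d) ∧
    HSch (SDSOSset n) G (2 * d) ⊆ HSch (SONCset n) G (2 * d) ∧
    boundPut f (SDSOSset n) G (2 * d) ≤ boundPut f (SONCset n) G (2 * d) ∧
    boundSch f (SDSOSset n) G (2 * d) ≤ boundSch f (SONCset n) G (2 * d) := by
  have hP := hput_mono (sdsos_subset_sonc n) G (2 * d)
  have hS := hsch_mono (sdsos_subset_sonc n) G (2 * d)
  refine ⟨hP, hS, ?_, ?_⟩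
  · exact sSup_le_sSup (fun x ⟨lam, hx, hmem⟩ => ⟨lam, hx, hP hmem⟩)
  · exact sSup_le_sSup (fun x ⟨lam, hx, hmem⟩ => ⟨lam, hx, hS hmem⟩)
end
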